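/- If T is a tree of order n ≥ 10 and diameter n − 2, then θ_3(T) ≥ 2. -/

import Mathlib

namespace AscPaper

open SimpleGraph

/-- The eccentricity of a vertex `u` in a graph `G`, as an extended natural number:
the supremum of distances from `u` to all vertices. -/
noncomputable def ecc {V : Type*} (G : SimpleGraph V) (u : V) : ℕ∞ :=
  ⨆ v, G.edist u v

/-- The radius of a graph: the minimum eccentricity over all vertices. -/
noncomputable def graphRadius {V : Type*} (G : SimpleGraph V) : ℕ∞ :=
  ⨅ u, ecc G u

/-- The diameter of a graph: the maximum eccentricity over all vertices. -/
noncomputable def graphDiam {V : Type*} (G : SimpleGraph V) : ℕ∞ :=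
  ⨆ u, ecc G u

/-- The eccentric set of `u`: all vertices at distance exactly `ecc G u` from `u`. -/
def eccSet {V : Type*} (G : SimpleGraph V) (u : V) : Set V :=
  {v | G.edist u v = ecc G u}

/-- `H` is an `r`-ASC (almost self-centered) graph: `H` is connected, has radius `r`,
and all but exactly two vertices are central (have eccentricity equal to the radius). -/
def IsASC {V : Type*} (r : ℕ) (H : SimpleGraph V) : Prop :=
  H.Connected ∧ graphRadius H = (r : ℕ∞) ∧
    {u : V | ecc H u ≠ graphRadius H}.ncard = 2

/-- The `r`-ASC index of a graph `G`: the minimum number `k` of vertices that need to be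
added to `G` so that the resulting graph is an `r`-ASC graph containing `G` as an
induced subgraph. -/
noncomputable def theta {V : Type*} (r : ℕ) (G : SimpleGraph V) : ℕ :=
  sInf {k : ℕ | ∃ H : SimpleGraph (V ⊕ Fin k), IsASC r H ∧
    ∀ u v : V, H.Adj (Sum.inl u) (Sum.inl v) ↔ G.Adj u v}


/-!
As `theta` is an `sInf` in `ℕ`, which is `0` on the empty set, we first need some `k` that works:
blowing up one vertex of a fixed 8-vertex graph of radius 3, in which exactly two vertices are not
central, into a copy of `T` gives a 3-ASC graph with 7 added vertices. It remains to exclude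
`k = 0` and `k = 1`, which we do for every radius `r` with `2r + 4 ≤ n`.

With no added vertex, `H` is `T`, and `n - 2 = diam T ≤ 2 rad T = 2r`. With one added vertex `w`,
pick `z` with `d(w, z) ≥ r`. A shortest `H`-path between vertices of `T` either stays in `T` or
passes through `w`, and a path through `w` starting or ending at `z` has length at least `r + 1`.
Hence every vertex of `T` that is central in `H` is within `T`-distance `r` of `z`, while `z`
itself is not central, since every vertex of `T` has `T`-eccentricity more than `r`. So the `T`-ball of
radius `r` around `z` has at least `n - 1` vertices. But a diametral path of `T` misses only one
vertex and meets this ball in at most `2r + 1` vertices, so `n - 1 ≤ 2r + 2`.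
-/

open Sum

section Metric

variable {W : Type*} {G : SimpleGraph W}

lemma isASC_iff {r : ℕ} : IsASC r G ↔ G.Connected ∧ G.radius = r ∧ G.centerᶜ.ncard = 2 :=
  Iff.rfl

lemma le_add_edist_of_adj_le (g : W → ℕ∞) (hg : ∀ a b, G.Adj a b → g a ≤ g b + 1) (u v : W) :
    g u ≤ g v + G.edist u v := by
  obtain h | h := eq_or_ne (G.edist u v) ⊤
  · simp [h]
  obtain ⟨p, hp⟩ := exists_walk_of_edist_ne_top h
  rw [← hp]
  clear hp h
  induction p with
  | nil => simp
  | @cons a b c hadj q ih =>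
    calc g a ≤ g b + 1 := hg a b hadj
      _ ≤ g c + q.length + 1 := by gcongr
      _ = _ := by rw [Walk.length_cons, Nat.cast_succ, add_assoc]

lemma edist_le_of_exists_adj_lt (g : W → ℕ) {v : W} (hv : ∀ x, g x = 0 → x = v)
    (hg : ∀ x, g x ≠ 0 → ∃ y, G.Adj x y ∧ g y < g x) (x : W) : G.edist x v ≤ g x := by
  induction hx : g x using Nat.strong_induction_on generalizing x with
  | _ k ih =>
    obtain rfl | hk := eq_or_ne k 0
    · simp [hv x hx]
    obtain ⟨y, hxy, hy⟩ := hg x (hx ▸ hk)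
    calc G.edist x v ≤ G.edist x y + G.edist y v := G.edist_triangle
      _ ≤ 1 + g y := add_le_add (edist_eq_one_iff_adj.2 hxy).le (ih _ (hx ▸ hy) y rfl)
      _ ≤ k := by norm_cast; omega

lemma edist_map_le {W' : Type*} {G' : SimpleGraph W'} (f : G →g G') (u v : W) :
    G'.edist (f u) (f v) ≤ G.edist u v := by
  obtain h | h := eq_or_ne (G.edist u v) ⊤
  · simp [h]
  obtain ⟨p, hp⟩ := exists_walk_of_edist_ne_top h
  rw [← hp, ← Walk.length_map f]
  exact edist_le _

lemma sub_le_edist_getVert {u v : W} (p : G.Walk u v) (hp : G.edist u v = p.length) {i j : ℕ}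
    (hij : i ≤ j) (hj : j ≤ p.length) :
    ((j - i : ℕ) : ℕ∞) ≤ G.edist (p.getVert i) (p.getVert j) := by
  have hi : G.edist u (p.getVert i) ≤ i := by
    simpa [Walk.take_length, hij.trans hj] using edist_le (p.take i)
  have hj' : G.edist (p.getVert j) v ≤ (p.length - j : ℕ) := by
    simpa [Walk.drop_length] using edist_le (p.drop j)
  have key : (p.length : ℕ∞) ≤ i + G.edist (p.getVert i) (p.getVert j) + (p.length - j : ℕ) :=
    calc (p.length : ℕ∞) = G.edist u v := hp.symm
      _ ≤ G.edist u (p.getVert i) + G.edist (p.getVert i) (p.getVert j) +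
          G.edist (p.getVert j) v :=
        G.edist_triangle.trans (by rw [add_assoc]; exact add_le_add le_rfl G.edist_triangle)
      _ ≤ _ := by gcongr
  generalize G.edist (p.getVert i) (p.getVert j) = d at key ⊢
  induction d using ENat.recTopCoe with
  | top => exact le_top
  | coe d => norm_cast at key ⊢; omega

lemma lt_eccent_of_two_mul_lt_ediam {r : ℕ} (h : 2 * r < G.ediam) (u : W) :
    (r : ℕ∞) < G.eccent u := by
  by_contra! hu
  exact h.not_ge ((G.ediam_le_two_mul_eccent u).trans (by gcongr))

lemma ncard_setOf_edist_getVert_le {u v : W} (p : G.Walk u v) (hp : G.edist u v = p.length)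
    (z : W) (r : ℕ) : {i | i ≤ p.length ∧ G.edist (p.getVert i) z ≤ r}.ncard ≤ 2 * r + 1 := by
  set I := {i | i ≤ p.length ∧ G.edist (p.getVert i) z ≤ r}
  obtain hI | hI := I.eq_empty_or_nonempty
  · simp [hI]
  have ha : sInf I ∈ I := Nat.sInf_mem hI
  have hIcc : I ⊆ Set.Icc (sInf I) (sInf I + 2 * r) := fun i hi => by
    have hdist := (sub_le_edist_getVert p hp (Nat.sInf_le hi) hi.1).trans
      (G.edist_triangle.trans (add_le_add ha.2 (G.edist_comm ▸ hi.2)))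
    norm_cast at hdist
    exact ⟨Nat.sInf_le hi, by omega⟩
  calc I.ncard ≤ (Set.Icc (sInf I) (sInf I + 2 * r)).ncard :=
        Set.ncard_le_ncard hIcc (Set.finite_Icc _ _)
    _ = 2 * r + 1 := by rw [Set.ncard_Icc_nat]; omega

/-- A geodesic of length `m` meets a ball of radius `r` in at most `2r + 1` of its `m + 1`
vertices. -/
lemma ncard_ball_add_le [Finite W] {u v : W} {m : ℕ} (huv : G.edist u v = m) (z : W) (r : ℕ) :
    {y | G.edist y z ≤ r}.ncard + m ≤ Nat.card W + 2 * r := by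
  obtain ⟨p, rfl⟩ := exists_walk_of_edist_eq_coe huv
  set P := p.getVert '' Set.Iic p.length
  set I := {i | i ≤ p.length ∧ G.edist (p.getVert i) z ≤ r}
  have hinj : Set.InjOn p.getVert (Set.Iic p.length) :=
    (p.isPath_of_length_eq_dist (by simp [SimpleGraph.dist, huv])).getVert_injOn
  have hball : {y | G.edist y z ≤ r} ⊆ Pᶜ ∪ p.getVert '' I := by
    intro y hy
    by_cases hP : y ∈ P
    · obtain ⟨i, hi, rfl⟩ := hP
      exact Or.inr ⟨i, ⟨hi, hy⟩, rfl⟩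
    · exact Or.inl hP
  have hP : P.ncard = p.length + 1 := by rw [hinj.ncard_image, Set.ncard_Iic_nat]
  have := Set.ncard_add_ncard_compl P
  have := (Set.ncard_le_ncard hball).trans (Set.ncard_union_le _ _)
  have := Set.ncard_image_le (f := p.getVert)
    ((Set.finite_Iic p.length).subset fun (i : ℕ) (hi : i ∈ I) => hi.1)
  have : I.ncard ≤ 2 * r + 1 := ncard_setOf_edist_getVert_le p huv z r
  omega

end Metric

section Extension

variable {V U : Type*} {T : SimpleGraph V} {H : SimpleGraph (V ⊕ U)}

lemma edist_le_length_of_forall_isLeft (hind : ∀ u v, H.Adj (inl u) (inl v) ↔ T.Adj u v)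
    {x y : V ⊕ U} (p : H.Walk x y) (hp : ∀ z ∈ p.support, z.isLeft) {a b : V}
    (ha : x = inl a) (hb : y = inl b) : T.edist a b ≤ p.length := by
  induction p generalizing a with
  | nil =>
    cases inl_injective (ha.symm.trans hb)
    simp
  | @cons x z y hxz q ih =>
    obtain ⟨c, rfl⟩ := isLeft_iff.1 (hp z (by simp))
    subst ha
    calc T.edist a b ≤ T.edist a c + T.edist c b := T.edist_triangle
      _ ≤ 1 + q.length :=
        add_le_add (edist_eq_one_iff_adj.2 ((hind a c).1 hxz)).le
          (ih (fun w hw => hp w (by simp [hw])) rfl hb)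
      _ = (q.cons hxz).length := by rw [Walk.length_cons, Nat.cast_succ, add_comm]

lemma edist_le_edist_inl_or_exists_inr (hind : ∀ u v, H.Adj (inl u) (inl v) ↔ T.Adj u v)
    (a b : V) :
    T.edist a b ≤ H.edist (inl a) (inl b) ∨
      ∃ w : U, H.edist (inl a) (inr w) + H.edist (inr w) (inl b) ≤ H.edist (inl a) (inl b) := by
  obtain h | h := eq_or_ne (H.edist (inl a) (inl b)) ⊤
  · simp [h]
  obtain ⟨p, hp⟩ := exists_walk_of_edist_ne_top h
  rw [← hp]
  classical
  by_cases hw : ∃ w : U, inr w ∈ p.support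
  swap
  · refine Or.inl (edist_le_length_of_forall_isLeft hind p (fun z hz => ?_) rfl rfl)
    cases z with
    | inl => rfl
    | inr w => exact absurd ⟨w, hz⟩ hw
  obtain ⟨w, hz⟩ := hw
  refine Or.inr ⟨w, ?_⟩
  calc _ ≤ ((p.takeUntil _ hz).length : ℕ∞) + (p.dropUntil _ hz).length :=
        add_le_add (edist_le _) (edist_le _)
    _ = p.length := by rw [← Nat.cast_add, ← Walk.length_append, Walk.take_spec]

lemma edist_le_edist_inl [IsEmpty U] (hind : ∀ u v, H.Adj (inl u) (inl v) ↔ T.Adj u v)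
    (a b : V) : T.edist a b ≤ H.edist (inl a) (inl b) :=
  (edist_le_edist_inl_or_exists_inr hind a b).resolve_right fun ⟨w, _⟩ => isEmptyElim w

theorem not_isASC_of_isEmpty [Fintype V] [IsEmpty U] {r : ℕ} (hn : 2 * r + 3 ≤ Fintype.card V)
    (hdiam : T.ediam = (Fintype.card V - 2 : ℕ))
    (hind : ∀ u v, H.Adj (inl u) (inl v) ↔ T.Adj u v) : ¬ IsASC r H := by
  intro hH
  have hdiam_le : T.ediam ≤ 2 * r := by
    rw [← (isASC_iff.1 hH).2.1]
    exact ediam_le_iff.2 fun a b =>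
      (edist_le_edist_inl hind a b).trans (edist_le_ediam.trans H.ediam_le_two_mul_radius)
  rw [hdiam] at hdiam_le
  norm_cast at hdiam_le
  omega

lemma edist_le_of_le_edist_inr [Subsingleton U] (hind : ∀ u v, H.Adj (inl u) (inl v) ↔ T.Adj u v)
    {a b : V} {w : U} {r : ℕ} (hab : H.edist (inl a) (inl b) ≤ r)
    (hw : r ≤ H.edist (inl a) (inr w) ∨ r ≤ H.edist (inr w) (inl b)) : T.edist a b ≤ r := by
  refine (edist_le_edist_inl_or_exists_inr hind a b).elim (fun h => h.trans hab) ?_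
  rintro ⟨w', hw'⟩
  rw [Subsingleton.elim w' w] at hw'
  have h1 : 1 ≤ H.edist (inl a) (inr w) := Order.one_le_iff_pos.2 (edist_pos_of_ne (by simp))
  have h2 : 1 ≤ H.edist (inr w) (inl b) := Order.one_le_iff_pos.2 (edist_pos_of_ne (by simp))
  have : (r : ℕ∞) + 1 ≤ r := by
    refine le_trans ?_ (hw'.trans hab)
    rcases hw with hw | hw
    · exact add_le_add hw h2
    · rw [add_comm]; exact add_le_add h1 hw
  norm_cast at this
  omega

lemma exists_radius_le_edist_inr [Finite V] [Nonempty V] [Unique U] :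
    ∃ z : V, H.radius ≤ H.edist (inr default) (inl z) := by
  have : Nontrivial (V ⊕ U) :=
    nontrivial_of_ne (inl (Classical.arbitrary V)) (inr default) (by simp)
  obtain ⟨y, hy⟩ := H.exists_edist_eq_eccent_of_finite (inr default)
  rcases y with z | w
  · exact ⟨z, hy ▸ radius_le_eccent⟩
  · rw [Unique.eq_default w, edist_self] at hy
    exact absurd hy.symm (eccent_ne_zero _)

lemma exists_ncard_compl_ball_le_one [Finite V] [Nonempty V] [Unique U] {r : ℕ}
    (hind : ∀ u v, H.Adj (inl u) (inl v) ↔ T.Adj u v) (hecc : ∀ y, (r : ℕ∞) < T.eccent y)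
    (hrad : H.radius = r) (hN : H.centerᶜ.ncard = 2) :
    ∃ z, {a | T.edist a z ≤ r}ᶜ.ncard ≤ 1 := by
  obtain ⟨z, hz⟩ := exists_radius_le_edist_inr (H := H)
  rw [hrad] at hz
  have hclose : ∀ a, inl a ∈ H.center → T.edist a z ≤ r := fun a ha =>
    edist_le_of_le_edist_inr hind (edist_le_eccent.trans ((mem_center_iff _).1 ha ▸ hrad).le)
      (Or.inr hz)
  have hz_center : inl z ∉ H.center := fun hzc =>
    (hecc z).not_ge ((eccent_le_iff _ _).2 fun b => edist_le_of_le_edist_inr hind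
      (edist_le_eccent.trans ((mem_center_iff _).1 hzc ▸ hrad).le) (Or.inl (H.edist_comm ▸ hz)))
  have hfar : {a | T.edist a z ≤ r}ᶜ ⊆ inl ⁻¹' H.centerᶜ \ {z} := fun a ha =>
    ⟨fun hac => ha (hclose a hac), fun haz => ha (by simp [show a = z from haz])⟩
  refine ⟨z, (Set.ncard_le_ncard hfar).trans ?_⟩
  rw [Set.ncard_sdiff_singleton_of_mem hz_center]
  have : (inl ⁻¹' H.centerᶜ).ncard ≤ H.centerᶜ.ncard :=
    Set.ncard_le_ncard_of_injOn inl (fun a ha => ha) inl_injective.injOn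
  omega

theorem not_isASC_of_unique [Fintype V] [Unique U] {r : ℕ} (hn : 2 * r + 4 ≤ Fintype.card V)
    (hdiam : T.ediam = (Fintype.card V - 2 : ℕ))
    (hind : ∀ u v, H.Adj (inl u) (inl v) ↔ T.Adj u v) : ¬ IsASC r H := by
  rw [isASC_iff]
  rintro ⟨-, hrad, hN⟩
  have : Nonempty V := Fintype.card_pos_iff.1 (by omega)
  have hecc := lt_eccent_of_two_mul_lt_ediam (G := T) (r := r) (by rw [hdiam]; norm_cast; omega)
  obtain ⟨z, hz⟩ := exists_ncard_compl_ball_le_one hind hecc hrad hN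
  obtain ⟨u, v, huv⟩ := T.exists_edist_eq_ediam_of_finite
  have hball := ncard_ball_add_le (huv.trans hdiam) z r
  have := Set.ncard_add_ncard_compl {a | T.edist a z ≤ r}
  rw [Nat.card_eq_fintype_card] at *
  omega

end Extension

section Blowup

def model : SimpleGraph (Fin 8) :=
  SimpleGraph.fromRel fun a b => (a.val, b.val) ∈
    [(0, 1), (0, 5), (0, 6), (1, 5), (2, 3), (2, 4), (3, 5), (4, 6), (6, 7)]

instance : DecidableRel model.Adj :=
  inferInstanceAs (DecidableRel (SimpleGraph.fromRel _).Adj)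

def modelDist : Fin 8 → Fin 8 → ℕ :=
  ![![0, 1, 3, 2, 2, 1, 1, 2],
    ![1, 0, 3, 2, 3, 1, 2, 3],
    ![3, 3, 0, 1, 1, 2, 2, 3],
    ![2, 2, 1, 0, 2, 1, 3, 4],
    ![2, 3, 1, 2, 0, 3, 1, 2],
    ![1, 1, 2, 1, 3, 0, 2, 3],
    ![1, 2, 2, 3, 1, 2, 0, 1],
    ![2, 3, 3, 4, 2, 3, 1, 0]]

def modelEcc : Fin 8 → ℕ := ![3, 3, 3, 4, 3, 3, 3, 4]

lemma modelDist_eq_zero_iff : ∀ a b, modelDist a b = 0 ↔ a = b := by decide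

lemma modelDist_le_add_one_of_adj :
    ∀ a b c, model.Adj a b → modelDist a c ≤ modelDist b c + 1 := by decide

lemma exists_adj_modelDist_lt :
    ∀ a b, modelDist a b ≠ 0 → ∃ c, model.Adj a c ∧ modelDist c b < modelDist a b := by decide

lemma modelDist_le_modelEcc : ∀ a b, modelDist a b ≤ modelEcc a := by decide

lemma exists_modelDist_succ_eq_modelEcc : ∀ a, ∃ j : Fin 7, modelDist a j.succ = modelEcc a := by
  decide

lemma three_le_modelEcc : ∀ a, 3 ≤ modelEcc a := by decide

lemma modelEcc_le_four : ∀ a, modelEcc a ≤ 4 := by decide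

lemma modelEcc_succ_ne_three_iff : ∀ i : Fin 7, modelEcc i.succ ≠ 3 ↔ i = 2 ∨ i = 6 := by decide

lemma edist_le_modelDist (a b : Fin 8) : model.edist a b ≤ modelDist a b :=
  edist_le_of_exists_adj_lt (modelDist · b) (fun x => (modelDist_eq_zero_iff x b).1)
    (fun x => exists_adj_modelDist_lt x b) a

variable {V : Type*} {T : SimpleGraph V}

def proj : V ⊕ Fin 7 → Fin 8 := Sum.elim (fun _ => 0) Fin.succ

/-- `model` with its vertex `0` replaced by a copy of `T`. -/
def blowup (T : SimpleGraph V) : SimpleGraph (V ⊕ Fin 7) :=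
  (T ⊕g ⊥) ⊔ SimpleGraph.comap proj model

lemma blowup_adj {x y : V ⊕ Fin 7} :
    (blowup T).Adj x y ↔ (T ⊕g ⊥).Adj x y ∨ model.Adj (proj x) (proj y) :=
  Iff.rfl

lemma blowup_adj_inl {u v : V} : (blowup T).Adj (inl u) (inl v) ↔ T.Adj u v := by
  simp [blowup_adj, proj]

lemma proj_eq_or_adj_of_adj {x y : V ⊕ Fin 7} (h : (blowup T).Adj x y) :
    proj x = proj y ∨ model.Adj (proj x) (proj y) := by
  rcases blowup_adj.1 h with h | h
  · cases x <;> cases y <;> simp_all [proj]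
  · exact Or.inr h

lemma proj_cases (v₀ : V) (a : Fin 8) : proj (Fin.cases (inl v₀) inr a : V ⊕ Fin 7) = a := by
  cases a using Fin.cases <;> rfl

def modelSection (T : SimpleGraph V) (v₀ : V) : model →g blowup T where
  toFun := Fin.cases (inl v₀) inr
  map_rel' h := blowup_adj.2 <| Or.inr <| by rwa [proj_cases, proj_cases]

lemma modelDist_proj_le_edist (x y : V ⊕ Fin 7) :
    (modelDist (proj x) (proj y) : ℕ∞) ≤ (blowup T).edist x y := by
  have := le_add_edist_of_adj_le (G := blowup T) (fun z => (modelDist (proj z) (proj y) : ℕ∞))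
    (fun a b hab => ?_) x y
  · simpa [(modelDist_eq_zero_iff _ _).2] using this
  rcases proj_eq_or_adj_of_adj hab with h | h
  · rw [h]
    exact le_self_add
  · exact_mod_cast modelDist_le_add_one_of_adj _ _ _ h

lemma edist_blowup_le_modelEcc [Nonempty V] (x y : V ⊕ Fin 7) :
    (blowup T).edist x y ≤ modelEcc (proj x) := by
  have hsection (v₀ : V) (a b : Fin 8) :
      (blowup T).edist (modelSection T v₀ a) (modelSection T v₀ b) ≤ modelEcc a :=
    (edist_map_le _ a b).trans <| (edist_le_modelDist a b).trans (by
      exact_mod_cast modelDist_le_modelEcc a b)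
  rcases x with u | i <;> rcases y with v | j
  · have h01 : model.Adj 0 1 := by decide
    have hu : (blowup T).Adj (inl u) (inr 0) := blowup_adj.2 (Or.inr h01)
    have hv : (blowup T).Adj (inr 0) (inl v) := blowup_adj.2 (Or.inr h01.symm)
    calc (blowup T).edist (inl u) (inl v) ≤ (hu.toWalk.append hv.toWalk).length := edist_le _
      _ ≤ modelEcc (proj (inl u : V ⊕ Fin 7)) := by norm_num [proj, modelEcc]
  · exact hsection u 0 j.succ
  · exact hsection v i.succ 0
  · exact hsection (Classical.arbitrary V) i.succ j.succ

lemma eccent_blowup [Nonempty V] (x : V ⊕ Fin 7) : (blowup T).eccent x = modelEcc (proj x) := by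
  refine le_antisymm ((eccent_le_iff _ _).2 (edist_blowup_le_modelEcc x)) ?_
  obtain ⟨j, hj⟩ := exists_modelDist_succ_eq_modelEcc (proj x)
  calc (modelEcc (proj x) : ℕ∞) = modelDist (proj x) (proj (inr j : V ⊕ Fin 7)) := by
        rw [← hj]; rfl
    _ ≤ (blowup T).edist x (inr j) := modelDist_proj_le_edist x _
    _ ≤ _ := edist_le_eccent

lemma radius_blowup [Nonempty V] : (blowup T).radius = 3 := by
  refine le_antisymm ?_ (le_iInf fun x => ?_)
  · calc (blowup T).radius ≤ (blowup T).eccent (inr 0) := radius_le_eccent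
      _ = 3 := by rw [eccent_blowup]; rfl
  · rw [eccent_blowup]
    exact_mod_cast three_le_modelEcc _

lemma isASC_blowup [Nonempty V] : IsASC 3 (blowup T) := by
  refine isASC_iff.2 ⟨connected_of_ediam_ne_top ?_, radius_blowup, ?_⟩
  · refine ne_top_of_le_ne_top (b := 4) (by simp) (ediam_le_of_edist_le fun x y => ?_)
    exact (edist_blowup_le_modelEcc x y).trans (by exact_mod_cast modelEcc_le_four _)
  · have : (blowup T).centerᶜ = {inr 2, inr 6} := by
      ext (u | i) <;> simp only [Set.mem_compl_iff, mem_center_iff, eccent_blowup, radius_blowup,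
        Set.mem_insert_iff, Set.mem_singleton_iff] <;> norm_cast
      · simp [proj, modelEcc]
      · simp [proj, modelEcc_succ_ne_three_iff]
    rw [this, Set.ncard_pair (by simp)]

end Blowup

theorem theta_three_tree_ge_general {V : Type*} [Fintype V] (T : SimpleGraph V) (n : ℕ)
    (hcard : Fintype.card V = n) (hn : 10 ≤ n)
    (hdiam : graphDiam T = ((n - 2 : ℕ) : ℕ∞)) :
    2 ≤ theta 3 T := by
  subst hcard
  have : Nonempty V := Fintype.card_pos_iff.1 (by omega)
  refine le_csInf ⟨7, blowup T, isASC_blowup, fun _ _ => blowup_adj_inl⟩ ?_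
  rintro k ⟨H, hH, hind⟩
  by_contra hk
  obtain rfl | rfl : k = 0 ∨ k = 1 := by omega
  · exact not_isASC_of_isEmpty (by omega) hdiam hind hH
  · exact not_isASC_of_unique (by omega) hdiam hind hH

/-- If `T` is a tree of order `n ≥ 10` and diameter `n − 2`, then `θ_3(T) ≥ 2`. -/
theorem theta_three_tree_ge {V : Type*} [Fintype V] (T : SimpleGraph V) (n : ℕ)
    (hcard : Fintype.card V = n) (hn : 10 ≤ n)
    (hconn : T.Connected) (hacyclic : T.IsAcyclic)
    (hdiam : graphDiam T = ((n - 2 : ℕ) : ℕ∞)) :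
    2 ≤ theta 3 T :=
  theta_three_tree_ge_general T n hcard hn hdiam

end AscPaper
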